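/- arXiv:2404.02336 — 3 statements merged into one kernel-verified Lean document; each statement's English description precedes it below -/
import Mathlib

section
/- If the basis functions ψ_1,...,ψ_N of the invariant subspace W are each of the form g_j ∘ F^{(i)} for some output component g_j and some i ≤ N−1 (as produced by the LOR construction), then the observability matrix O = [Γ; ΓK; ...; ΓK^{N−1}] of the LOR has rank N; i.e., the LOR is an observable linear system. -/
/-- If the basis functions `ψ₁, …, ψ_N` of the invariant subspace are linearly
independent and each appears among the component functions of the maps
`x ↦ Γ K^j ψ̂ x`, `0 ≤ j ≤ N-1`, then the observability matrix
`[Γ; ΓK; …; ΓK^(N-1)]` of the LOR has rank `N`: the LOR is observable. -/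
theorem lor_observable (Fq : Type*) [Field Fq] [Fintype Fq] (n m N : ℕ)
    (F : (Fin n → Fq) → (Fin n → Fq)) (g : (Fin n → Fq) → (Fin m → Fq))
    (ψ : (Fin n → Fq) → (Fin N → Fq))
    (K : Matrix (Fin N) (Fin N) Fq) (Γ : Matrix (Fin m) (Fin N) Fq)
    (hψ : ∀ x, ψ (F x) = K.mulVec (ψ x))
    (hg : ∀ x, g x = Γ.mulVec (ψ x))
    (hindep : LinearIndependent Fq (fun i : Fin N => fun x : Fin n → Fq => ψ x i))
    (hbasis : ∀ i : Fin N, ∃ (j : Fin N) (r : Fin m),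
      ∀ x : Fin n → Fq, ψ x i = (Γ * K ^ (j : ℕ)).mulVec (ψ x) r) :
    (Matrix.of fun (p : Fin N × Fin m) (c : Fin N) =>
      (Γ * K ^ (p.1 : ℕ)) p.2 c).rank = N := by
  classical
  set O : Matrix (Fin N × Fin m) (Fin N) Fq :=
    Matrix.of fun (p : Fin N × Fin m) (c : Fin N) => (Γ * K ^ (p.1 : ℕ)) p.2 c with hO
  -- each standard basis vector appears as a row of O
  have key : ∀ i : Fin N, ∃ p : Fin N × Fin m,
      ∀ c : Fin N, O p c = if c = i then 1 else 0 := by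
    intro i
    obtain ⟨j, r, hjr⟩ := hbasis i
    refine ⟨(j, r), ?_⟩
    have hsum : (∑ c : Fin N,
        ((Γ * K ^ (j : ℕ)) r c - if c = i then 1 else 0) •
          (fun x : Fin n → Fq => ψ x c)) = 0 := by
      funext x
      have hx := hjr x
      simp only [Matrix.mulVec, dotProduct] at hx
      simp only [Finset.sum_apply, Pi.smul_apply, smul_eq_mul, sub_mul, Pi.zero_apply,
        Finset.sum_sub_distrib, ite_mul, one_mul, zero_mul, Finset.sum_ite_eq', Finset.mem_univ,
        if_true]
      rw [← hx]
      ring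
    have := Fintype.linearIndependent_iff.mp hindep _ hsum
    intro c
    have hc := this c
    have : (Γ * K ^ (j : ℕ)) r c = if c = i then 1 else 0 := by
      have := sub_eq_zero.mp hc
      exact this
    simpa [hO] using this
  -- hence mulVecLin O is injective
  have hinj : Function.Injective O.mulVecLin := by
    rw [← LinearMap.ker_eq_bot, LinearMap.ker_eq_bot']
    intro u hu
    funext i
    obtain ⟨p, hp⟩ := key i
    have h0 : O.mulVec u p = 0 := congrFun hu p
    simp only [Matrix.mulVec, dotProduct] at h0
    have : (∑ c : Fin N, (if c = i then (1:Fq) else 0) * u c) = 0 :=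
      (Finset.sum_congr rfl fun c _ => by rw [hp c]).trans h0
    simpa using this
  have : Module.finrank Fq (LinearMap.range O.mulVecLin) = N := by
    rw [LinearMap.finrank_range_of_inj hinj]
    simp
  simpa [Matrix.rank] using this
end

section
/- Suppose the LOR (K, Γ, ψ̂) of a nonlinear system over F_q^n is observable (its observability matrix has trivial kernel) and the map ψ̂ : F_q^n → F_q^N is injective. Then the nonlinear system is observable: for any two initial conditions x_0, x_1 ∈ F_q^n, if g(F^{(k)}(x_0)) = g(F^{(k)}(x_1)) for all k = 0,...,N−1, then x_0 = x_1. -/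
/-- If the LOR is observable (its observability matrix has trivial kernel) and the
map `ψ̂ : F_q^n → F_q^N` is injective, then the nonlinear system is observable: any
two initial conditions producing the same outputs on the window `[0, N-1]` are equal. -/
theorem nonlinear_observable_of_lor (Fq : Type*) [Field Fq] [Fintype Fq] (n m N : ℕ)
    (F : (Fin n → Fq) → (Fin n → Fq)) (g : (Fin n → Fq) → (Fin m → Fq))
    (ψ : (Fin n → Fq) → (Fin N → Fq))
    (K : Matrix (Fin N) (Fin N) Fq) (Γ : Matrix (Fin m) (Fin N) Fq)
    (hψ : ∀ x, ψ (F x) = K.mulVec (ψ x))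
    (hg : ∀ x, g x = Γ.mulVec (ψ x))
    (hker : ∀ w : Fin N → Fq, (∀ k : ℕ, k < N → (Γ * K ^ k).mulVec w = 0) → w = 0)
    (hinj : Function.Injective ψ) :
    ∀ x₀ x₁ : Fin n → Fq,
      (∀ k : ℕ, k < N → g (F^[k] x₀) = g (F^[k] x₁)) → x₀ = x₁ := by
  intro x₀ x₁ hout
  have hiter : ∀ (k : ℕ) (x : Fin n → Fq), ψ (F^[k] x) = (K ^ k).mulVec (ψ x) := by
    intro k
    induction k with
    | zero => intro x; simp [Matrix.one_mulVec]
    | succ k ih =>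
      intro x
      rw [Function.iterate_succ_apply', hψ, ih, pow_succ']
      rw [← Matrix.mulVec_mulVec]
  apply hinj
  have := hker (ψ x₀ - ψ x₁) (by
    intro k hk
    have h := hout k hk
    rw [hg, hg, hiter, hiter] at h
    rw [Matrix.mulVec_sub, ← Matrix.mulVec_mulVec, ← Matrix.mulVec_mulVec, h, sub_self])
  exact sub_eq_zero.mp this
end

section
/- For an observable nonlinear system over F_q^n with LOR of dimension N, at most N outputs suffice to determine any initial condition: if g(F^{(k)}(x_0)) = g(F^{(k)}(x_1)) for k = 0,...,N−1, then g(F^{(k)}(x_0)) = g(F^{(k)}(x_1)) for all k ≥ 0, and hence x_0 = x_1. -/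
private theorem sum_mulVec_helper {α ι m' n' : Type*} [NonUnitalNonAssocSemiring α]
    [Fintype n'] (s : Finset ι) (f : ι → Matrix m' n' α) (v : n' → α) :
    (∑ i ∈ s, f i).mulVec v = ∑ i ∈ s, (f i).mulVec v := by
  induction s using Finset.cons_induction with
  | empty => simp
  | cons a s ha ih => simp [Finset.sum_cons, Matrix.add_mulVec, ih]


/-- For an observable nonlinear system with LOR of dimension `N`, at most `N` outputs
suffice: agreement of outputs on `[0, N-1]` implies agreement of outputs forever, and
hence equality of the initial conditions. -/
theorem N_outputs_suffice (Fq : Type*) [Field Fq] [Fintype Fq] (n m N : ℕ)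
    (F : (Fin n → Fq) → (Fin n → Fq)) (g : (Fin n → Fq) → (Fin m → Fq))
    (ψ : (Fin n → Fq) → (Fin N → Fq))
    (K : Matrix (Fin N) (Fin N) Fq) (Γ : Matrix (Fin m) (Fin N) Fq)
    (hψ : ∀ x, ψ (F x) = K.mulVec (ψ x))
    (hg : ∀ x, g x = Γ.mulVec (ψ x))
    (hobs : ∀ x₀ x₁ : Fin n → Fq,
      (∀ k : ℕ, g (F^[k] x₀) = g (F^[k] x₁)) → x₀ = x₁) :
    ∀ x₀ x₁ : Fin n → Fq,
      (∀ k : ℕ, k < N → g (F^[k] x₀) = g (F^[k] x₁)) →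
      (∀ k : ℕ, g (F^[k] x₀) = g (F^[k] x₁)) ∧ x₀ = x₁ := by
  intro x₀ x₁ hN
  -- iterate the LOR relation
  have hiter : ∀ (k : ℕ) (x : Fin n → Fq), ψ (F^[k] x) = (K ^ k).mulVec (ψ x) := by
    intro k
    induction k with
    | zero => intro x; simp
    | succ k ih =>
      intro x
      rw [Function.iterate_succ_apply', hψ, ih, Matrix.mulVec_mulVec, ← pow_succ']
  -- output at time k
  have hout : ∀ (k : ℕ) (x : Fin n → Fq), g (F^[k] x) = (Γ * K ^ k).mulVec (ψ x) := by
    intro k x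
    rw [hg, hiter, Matrix.mulVec_mulVec]
  -- Cayley–Hamilton
  have hdeg : K.charpoly.natDegree = N := by
    rcases Nat.eq_zero_or_pos N with h0 | hpos
    · subst h0
      have : K.charpoly = 1 := by
        simp [Matrix.charpoly]
      simp [this]
    · haveI : Nontrivial Fq := inferInstance
      set_option linter.unnecessarySimpa false in
      simpa using Matrix.charpoly_natDegree_eq_dim K
  have hCH : K ^ N = -∑ i ∈ Finset.range N, K.charpoly.coeff i • K ^ i := by
    have h0 := Matrix.aeval_self_charpoly K
    rw [Polynomial.aeval_eq_sum_range' (n := N + 1) (by omega) K,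
      Finset.sum_range_succ] at h0
    have hcN : K.charpoly.coeff N = 1 := by
      have := K.charpoly_monic
      rw [Polynomial.Monic, Polynomial.leadingCoeff, hdeg] at this
      exact this
    rw [hcN, one_smul] at h0
    linear_combination (norm := abel) h0
  set v : Fin N → Fq := ψ x₀ - ψ x₁ with hv
  -- key claim
  have key : ∀ k : ℕ, (Γ * K ^ k).mulVec v = 0 := by
    intro k
    induction k using Nat.strong_induction_on with
    | _ k ih =>
      by_cases hk : k < N
      · have := hN k hk
        rw [hout, hout] at this
        rw [hv, Matrix.mulVec_sub, this, sub_self]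
      · push_neg at hk
        have hksplit : K ^ k = K ^ (k - N) * K ^ N := by
          rw [← pow_add]; congr 1; omega
        rw [hksplit, hCH]
        have expand : Γ * (K ^ (k - N) * -∑ i ∈ Finset.range N, K.charpoly.coeff i • K ^ i)
            = -∑ i ∈ Finset.range N, K.charpoly.coeff i • (Γ * K ^ (k - N + i)) := by
          rw [mul_neg, Matrix.mul_neg]
          congr 1
          rw [← Matrix.mul_assoc, Matrix.mul_sum]
          refine Finset.sum_congr rfl fun i _ => ?_
          rw [Matrix.mul_smul, Matrix.mul_assoc, ← pow_add]
        rw [expand, Matrix.neg_mulVec]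
        have : (∑ i ∈ Finset.range N, K.charpoly.coeff i • (Γ * K ^ (k - N + i))).mulVec v
            = ∑ i ∈ Finset.range N,
              K.charpoly.coeff i • (Γ * K ^ (k - N + i)).mulVec v := by
          rw [sum_mulVec_helper]
          refine Finset.sum_congr rfl fun i _ => ?_
          exact Matrix.smul_mulVec _ _ _
        rw [this]
        have hzero : ∀ i ∈ Finset.range N,
            K.charpoly.coeff i • (Γ * K ^ (k - N + i)).mulVec v = 0 := by
          intro i hi
          rw [ih (k - N + i) (by simp at hi; omega), smul_zero]
        rw [Finset.sum_congr rfl hzero, Finset.sum_const_zero, neg_zero]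
  have hall : ∀ k : ℕ, g (F^[k] x₀) = g (F^[k] x₁) := by
    intro k
    have := key k
    rw [hv, Matrix.mulVec_sub, sub_eq_zero] at this
    rw [hout, hout, this]
  exact ⟨hall, hobs x₀ x₁ hall⟩
end
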